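/- arXiv:math/0202092 — 5 statements merged into one kernel-verified Lean document; each statement's English description precedes it below -/
import Mathlib

section
/- Let d be a rational number and Ɓ a finite list of pairs of coprime integers (r,a) with 0 < a < r, and let P_{d,Ɓ}(t) ∈ ℚ⟦t⟧ be the K3 Hilbert series. Then the constant coefficient of P_{d,Ɓ} equals 1, and for every integer n ≥ 1 the coefficient of t^n in P_{d,Ɓ} equals 2 + n^2·d/2 − Σ_{(r,a)∈Ɓ} \overline{bn}(r - \overline{bn})/(2r), where for each pair b is the inverse of a modulo r and \overline{m} denotes the least nonnegative residue of m modulo r. -/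
/-- The K3 Hilbert series `P_{d,Ɓ}` as a formal power series in `ℚ⟦t⟧`, where the
basket is recorded as a list of pairs `(r, b)` (with `b` the inverse mod `r` of the
singularity type `a`), and `\overline{m}` is the least nonnegative residue mod `r`. -/
noncomputable def K3HilbertSeries (d : ℚ) (B : List (ℕ × ℕ)) : PowerSeries ℚ :=
  (1 + PowerSeries.X) * (1 - PowerSeries.X)⁻¹
    + PowerSeries.X * (1 + PowerSeries.X) * ((1 - PowerSeries.X) ^ 3)⁻¹
        * PowerSeries.C (d / 2)
    - (B.map (fun p =>
        (1 - PowerSeries.X ^ p.1)⁻¹ *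
          ∑ i ∈ Finset.Icc 1 (p.1 - 1),
            PowerSeries.C ((((p.2 * i) % p.1 : ℕ) : ℚ)
                * ((p.1 : ℚ) - (((p.2 * i) % p.1 : ℕ) : ℚ)) / (2 * (p.1 : ℚ)))
              * PowerSeries.X ^ i)).sum

/-!
Each summand of `P_{d,Ɓ}` is expanded by multiplying back by its denominator:
`(1 + t)/(1 - t) = 1 + 2 ∑_{n ≥ 1} tⁿ` and `t(1 + t)/(1 - t)³ = ∑ n² tⁿ`, while the numerator of a
basket term is the first period of the `r`-periodic sequence `n ↦ \overline{bn}(r - \overline{bn})/(2r)`,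
which vanishes at `n = 0`; dividing it by `1 - tʳ` repeats that period forever.
-/

open PowerSeries Finset

section CommRing

variable {R : Type*} [CommRing R]

theorem PowerSeries.mk_one_two_mul_one_sub_X :
    mk (fun n => if n = 0 then (1 : R) else 2) * (1 - X) = 1 + X := by
  ext (_ | _ | n) <;> norm_num [mul_sub, coeff_succ_mul_X, coeff_X]

theorem PowerSeries.mk_sq_mul_one_sub_X_pow_three :
    mk (fun n => (n : R) ^ 2) * (1 - X) ^ 3 = X * (1 + X) := by
  have h : (1 - X : R⟦X⟧) ^ 3 = 1 - C 3 * X ^ 1 + C 3 * X ^ 2 - X ^ 3 := by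
    simp only [map_ofNat]; ring
  ext n
  rw [h, mul_one_add, ← pow_two]
  simp only [mul_sub, mul_add, mul_one, mul_left_comm _ (C _), map_sub, map_add, coeff_C_mul,
    coeff_mul_X_pow', coeff_mk, coeff_X, coeff_X_pow]
  rcases n with _ | _ | _ | n <;> simp <;> ring

theorem PowerSeries.mk_mul_one_sub_X_pow_of_periodic {r : ℕ} (hr : 0 < r) {c : ℕ → R}
    (hc : Function.Periodic c r) (hc0 : c 0 = 0) :
    mk c * (1 - X ^ r) = ∑ i ∈ Icc 1 (r - 1), C (c i) * X ^ i := by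
  ext n
  simp only [map_sum, coeff_C_mul_X_pow, sum_ite_eq, mem_Icc]
  simp only [mul_sub, mul_one, map_sub, coeff_mk, coeff_mul_X_pow']
  by_cases hn : r ≤ n
  · obtain ⟨m, rfl⟩ := Nat.exists_eq_add_of_le' hn
    rw [if_pos hn, if_neg (by omega), Nat.add_sub_cancel, hc, sub_self]
  · rw [if_neg hn, sub_zero]
    rcases n.eq_zero_or_pos with rfl | hpos
    · rw [hc0, ite_self]
    · rw [if_pos (by omega)]

end CommRing

section Field

variable {k : Type*} [Field k]

theorem PowerSeries.one_add_X_mul_inv_one_sub_X :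
    (1 + X : k⟦X⟧) * (1 - X)⁻¹ = mk fun n => if n = 0 then 1 else 2 :=
  ((eq_mul_inv_iff_mul_eq (by simp)).2 mk_one_two_mul_one_sub_X).symm

theorem PowerSeries.X_mul_one_add_X_mul_inv_one_sub_X_pow_three :
    X * (1 + X : k⟦X⟧) * ((1 - X) ^ 3)⁻¹ = mk fun n => (n : k) ^ 2 :=
  ((eq_mul_inv_iff_mul_eq (by simp)).2 mk_sq_mul_one_sub_X_pow_three).symm

theorem PowerSeries.inv_one_sub_X_pow_mul_eq_mk_of_periodic {r : ℕ} (hr : 0 < r) {c : ℕ → k}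
    (hc : Function.Periodic c r) (hc0 : c 0 = 0) :
    (1 - X ^ r)⁻¹ * ∑ i ∈ Icc 1 (r - 1), C (c i) * X ^ i = mk c := by
  rw [mul_comm, eq_comm, eq_mul_inv_iff_mul_eq (by simp [zero_pow hr.ne'])]
  exact mk_mul_one_sub_X_pow_of_periodic hr hc hc0

end Field

def basketCorrection (p : ℕ × ℕ) (n : ℕ) : ℚ :=
  ((p.2 * n % p.1 : ℕ) : ℚ) * ((p.1 : ℚ) - ((p.2 * n % p.1 : ℕ) : ℚ)) / (2 * (p.1 : ℚ))

@[simp]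
theorem basketCorrection_zero (p : ℕ × ℕ) : basketCorrection p 0 = 0 := by
  simp [basketCorrection]

theorem basketCorrection_periodic (p : ℕ × ℕ) : Function.Periodic (basketCorrection p) p.1 := by
  intro n
  simp only [basketCorrection, Nat.mul_add, Nat.add_mul_mod_self_right]

theorem coeff_K3HilbertSeries (d : ℚ) {B : List (ℕ × ℕ)} (hB : ∀ p ∈ B, 0 < p.1) (n : ℕ) :
    coeff n (K3HilbertSeries d B) =
      (if n = 0 then 1 else 2) + (n : ℚ) ^ 2 * d / 2 - (B.map (basketCorrection · n)).sum := by
  have hbasket : ∀ p ∈ B, (1 - X ^ p.1)⁻¹ * ∑ i ∈ Icc 1 (p.1 - 1),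
      C (basketCorrection p i) * X ^ i = mk (basketCorrection p) := fun p hp =>
    inv_one_sub_X_pow_mul_eq_mk_of_periodic (hB p hp) (basketCorrection_periodic p)
      (basketCorrection_zero p)
  simp only [K3HilbertSeries, ← basketCorrection.eq_1]
  rw [one_add_X_mul_inv_one_sub_X, X_mul_one_add_X_mul_inv_one_sub_X_pow_three,
    List.map_congr_left hbasket]
  simp [map_list_sum, coeff_mul_C, Function.comp_def, mul_div_assoc]

/-- The coefficients of the K3 Hilbert series: the constant term is `1`
and for `n ≥ 1` the coefficient of `tⁿ` is
`2 + n²d/2 − Σ_{(r,a)∈Ɓ} \overline{bn}(r-\overline{bn})/(2r)`.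
The basket is given as a list of triples `(r, a, b)` with `0 < a < r`,
`gcd(a,r) = 1` and `b` the inverse of `a` mod `r`. -/
theorem k3_hilbert_series_coeff (d : ℚ) (B : List (ℕ × ℕ × ℕ))
    (hB : ∀ p ∈ B, 0 < p.2.1 ∧ p.2.1 < p.1 ∧ Nat.Coprime p.2.1 p.1 ∧
      1 ≤ p.2.2 ∧ p.2.2 ≤ p.1 - 1 ∧ (p.2.1 * p.2.2) % p.1 = 1) :
    PowerSeries.coeff 0 (K3HilbertSeries d (B.map fun p => (p.1, p.2.2))) = 1 ∧
    ∀ n : ℕ, 1 ≤ n →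
      PowerSeries.coeff n (K3HilbertSeries d (B.map fun p => (p.1, p.2.2))) =
        2 + (n : ℚ) ^ 2 * d / 2
          - (B.map (fun p => (((p.2.2 * n) % p.1 : ℕ) : ℚ)
              * ((p.1 : ℚ) - (((p.2.2 * n) % p.1 : ℕ) : ℚ)) / (2 * (p.1 : ℚ)))).sum := by
  have hr : ∀ p ∈ B.map (fun p => (p.1, p.2.2)), 0 < p.1 := by
    simp only [List.mem_map]
    rintro _ ⟨p, hp, rfl⟩
    exact (hB p hp).1.trans (hB p hp).2.1
  refine ⟨?_, fun n hn => ?_⟩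
  · simp [coeff_K3HilbertSeries d hr, Function.comp_def]
  · rw [coeff_K3HilbertSeries d hr, if_neg (by omega), List.map_map]
    rfl
end

section
/- Let d be a rational number and Ɓ a finite list of pairs of coprime integers (r,a) with 0 < a < r, and let Q_{d,Ɓ}(t) ∈ ℚ⟦t⟧ be the Fano Hilbert series. Then the constant coefficient of Q_{d,Ɓ} equals 1, and for every integer n ≥ 1 the coefficient of t^n in Q_{d,Ɓ} equals (2n+1) + d·n(n+1)(2n+1)/12 − Σ_{(r,a)∈Ɓ} Σ_{j=1}^{n} \overline{bj}(r - \overline{bj})/(2r), where for each pair b is the inverse of a modulo r and \overline{m} denotes the least nonnegative residue of m modulo r. -/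
/-- The Fano Hilbert series `Q_{d,Ɓ}` as a formal power series in `ℚ⟦t⟧`, where the
basket is recorded as a list of pairs `(r, b)` (with `b` the inverse mod `r` of the
singularity type `a`), and `\overline{m}` is the least nonnegative residue mod `r`. -/
noncomputable def FanoHilbertSeries (d : ℚ) (B : List (ℕ × ℕ)) : PowerSeries ℚ :=
  (1 + PowerSeries.X) * ((1 - PowerSeries.X) ^ 2)⁻¹
    + PowerSeries.X * (1 + PowerSeries.X) * ((1 - PowerSeries.X) ^ 4)⁻¹
        * PowerSeries.C (d / 2)
    - (B.map (fun p =>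
        ((1 - PowerSeries.X) * (1 - PowerSeries.X ^ p.1))⁻¹ *
          ∑ i ∈ Finset.Icc 1 (p.1 - 1),
            PowerSeries.C ((((p.2 * i) % p.1 : ℕ) : ℚ)
                * ((p.1 : ℚ) - (((p.2 * i) % p.1 : ℕ) : ℚ)) / (2 * (p.1 : ℚ)))
              * PowerSeries.X ^ i)).sum

/-!
Clearing denominators, each rational function in `Q_{d,Ɓ}` is identified with an explicit
series. Multiplying by `1 - X` takes first differences of coefficients, so four differences
of `n(n+1)(2n+1)/6` give `(1 - X)⁴ · Σ n(n+1)(2n+1)/6 Xⁿ = X(1 + X)`, and two differences of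
`2n + 1` give `(1 - X)² · Σ (2n+1) Xⁿ = 1 + X`. For a basket point, `j ↦ \overline{bj}(r -
\overline{bj})/(2r)` is `r`-periodic and vanishes at `j = 0`; multiplying its series by `1 - Xʳ`
leaves the polynomial of one period, and the factor `1 - X` undoes taking partial sums.
-/

open Finset PowerSeries

theorem Finset.sum_Icc_one_eq_sum_range_succ {M : Type*} [AddCommMonoid M] {f : ℕ → M}
    (hf : f 0 = 0) (n : ℕ) : ∑ i ∈ Icc 1 n, f i = ∑ i ∈ range (n + 1), f i := by
  rw [Nat.range_succ_eq_Icc_zero, ← insert_Icc_add_one_left_eq_Icc n.zero_le,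
    sum_insert (by simp), hf, zero_add, zero_add]

theorem Function.periodic_comp_mul_mod {α : Type*} (g : ℕ → α) (b r : ℕ) :
    Function.Periodic (fun j => g (b * j % r)) r := fun j => by
  simp only [Nat.mul_add, Nat.add_mul_mod_self_right]

namespace PowerSeries

section CommRing

variable {R : Type*} [CommRing R]

theorem one_sub_X_mul_mk_of_sub_eq {f g : ℕ → R} (h : ∀ n, f (n + 1) - f n = g n) :
    (1 - X) * mk f = C (f 0) + X * mk g := by
  ext (_ | n)
  · simp
  · simp [sub_mul, coeff_succ_X_mul, ← h]

theorem one_sub_X_mul_mk_const (a : R) : (1 - X) * mk (fun _ => a) = C a := by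
  ext (_ | n) <;> simp [sub_mul, coeff_succ_X_mul]

theorem one_sub_X_mul_mk_sum_range (f : ℕ → R) :
    (1 - X) * mk (fun n => ∑ i ∈ range (n + 1), f i) = mk f := by
  rw [one_sub_X_mul_mk_of_sub_eq (g := fun n => f (n + 1)) (fun n => by simp [sum_range_succ])]
  ext (_ | n) <;> simp [coeff_succ_X_mul]

theorem one_sub_X_pow_mul_mk_of_periodic {f : ℕ → R} {r : ℕ} (hf : Function.Periodic f r) :
    (1 - X ^ r) * mk f = ∑ i ∈ range r, C (f i) * X ^ i := by
  ext n
  simp only [sub_mul, one_mul, map_sub, coeff_X_pow_mul', coeff_mk, map_sum, coeff_C_mul_X_pow]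
  rw [sum_ite_eq]
  by_cases h : r ≤ n
  · obtain ⟨m, rfl⟩ := Nat.exists_eq_add_of_le' h
    simp [hf m]
  · simp [h, not_le.mp h]

theorem one_sub_X_sq_mul_mk_two_mul_add_one :
    (1 - X) ^ 2 * mk (fun n => (2 * n + 1 : R)) = 1 + X := by
  have h₁ := one_sub_X_mul_mk_of_sub_eq (f := fun n => (2 * n + 1 : R)) (g := fun _ => 2)
    (fun n => by push_cast; ring)
  have h₂ := one_sub_X_mul_mk_const (2 : R)
  simp only [Nat.cast_zero, mul_zero, zero_add, map_one, map_ofNat] at h₁ h₂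
  linear_combination (1 - X) * h₁ + X * h₂

end CommRing

section Field

variable {K : Type*} [Field K]

theorem one_sub_X_pow_four_mul_mk_sum_sq [CharZero K] :
    (1 - X) ^ 4 * mk (fun n => (n * (n + 1) * (2 * n + 1) / 6 : K)) = X * (1 + X) := by
  have h₁ := one_sub_X_mul_mk_of_sub_eq (f := fun n => (n * (n + 1) * (2 * n + 1) / 6 : K))
    (g := fun n => (n + 1) ^ 2) (fun n => by push_cast; ring)
  have h₂ := one_sub_X_mul_mk_of_sub_eq (f := fun n => ((n + 1) ^ 2 : K))
    (g := fun n => 2 * n + 3) (fun n => by push_cast; ring)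
  have h₃ := one_sub_X_mul_mk_of_sub_eq (f := fun n => (2 * n + 3 : K))
    (g := fun _ => 2) (fun n => by push_cast; ring)
  have h₄ := one_sub_X_mul_mk_const (2 : K)
  simp only [Nat.cast_zero, zero_mul, zero_div, map_zero, zero_add, mul_zero, one_pow, map_one,
    map_ofNat] at h₁ h₂ h₃ h₄
  linear_combination (1 - X) ^ 3 * h₁ + X * (1 - X) ^ 2 * h₂ + X ^ 2 * (1 - X) * h₃ + X ^ 3 * h₄

theorem mk_sum_Icc_eq_inv_mul_sum_Icc {f : ℕ → K} {r : ℕ} (hr : r ≠ 0)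
    (hf : Function.Periodic f r) (hf₀ : f 0 = 0) :
    mk (fun n => ∑ j ∈ Icc 1 n, f j) =
      ((1 - X) * (1 - X ^ r))⁻¹ * ∑ i ∈ Icc 1 (r - 1), C (f i) * X ^ i := by
  have hunit : constantCoeff ((1 - X : K⟦X⟧) * (1 - X ^ r)) ≠ 0 := by simp [zero_pow hr]
  rw [mul_comm, eq_mul_inv_iff_mul_eq hunit]
  simp only [sum_Icc_one_eq_sum_range_succ hf₀,
    sum_Icc_one_eq_sum_range_succ (f := fun i => C (f i) * X ^ i) (by simp [hf₀])]
  rw [Nat.sub_add_cancel (Nat.one_le_iff_ne_zero.mpr hr), ← one_sub_X_pow_mul_mk_of_periodic hf,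
    ← one_sub_X_mul_mk_sum_range f]
  ring

end Field

end PowerSeries

theorem fanoHilbertSeries_eq_mk (d : ℚ) {B : List (ℕ × ℕ)} (hB : ∀ p ∈ B, p.1 ≠ 0) :
    FanoHilbertSeries d B = mk fun n =>
      (2 * (n : ℚ) + 1) + d * (n : ℚ) * ((n : ℚ) + 1) * (2 * (n : ℚ) + 1) / 12
        - (B.map (fun p => ∑ j ∈ Icc 1 n,
            (((p.2 * j) % p.1 : ℕ) : ℚ) * ((p.1 : ℚ) - (((p.2 * j) % p.1 : ℕ) : ℚ))
              / (2 * (p.1 : ℚ)))).sum := by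
  have hodd : mk (fun n => (2 * n + 1 : ℚ)) = (1 + X) * ((1 - X) ^ 2)⁻¹ :=
    (eq_mul_inv_iff_mul_eq (by simp)).mpr
      ((mul_comm _ _).trans one_sub_X_sq_mul_mk_two_mul_add_one)
  have hcubic : mk (fun n => (n * (n + 1) * (2 * n + 1) / 6 : ℚ)) =
      X * (1 + X) * ((1 - X) ^ 4)⁻¹ :=
    (eq_mul_inv_iff_mul_eq (by simp)).mpr ((mul_comm _ _).trans one_sub_X_pow_four_mul_mk_sum_sq)
  have hbasket := List.map_congr_left fun p hp =>
    (mk_sum_Icc_eq_inv_mul_sum_Icc (hB p hp) (Function.periodic_comp_mul_mod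
      (fun m : ℕ => (m : ℚ) * (p.1 - m) / (2 * p.1)) p.2 p.1) (by simp)).symm
  rw [FanoHilbertSeries, ← hodd, ← hcubic, hbasket]
  ext n
  simp [map_list_sum, List.map_map, Function.comp_def]
  ring

/-- The coefficients of the Fano Hilbert series: the constant term
is `1` and for `n ≥ 1` the coefficient of `tⁿ` is
`(2n+1) + d·n(n+1)(2n+1)/12 − Σ_{(r,a)∈Ɓ} Σ_{j=1}^{n} \overline{bj}(r-\overline{bj})/(2r)`. -/
theorem fano_hilbert_series_coeff (d : ℚ) (B : List (ℕ × ℕ × ℕ))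
    (hB : ∀ p ∈ B, 0 < p.2.1 ∧ p.2.1 < p.1 ∧ Nat.Coprime p.2.1 p.1 ∧
      1 ≤ p.2.2 ∧ p.2.2 ≤ p.1 - 1 ∧ (p.2.1 * p.2.2) % p.1 = 1) :
    PowerSeries.coeff 0 (FanoHilbertSeries d (B.map fun p => (p.1, p.2.2))) = 1 ∧
    ∀ n : ℕ, 1 ≤ n →
      PowerSeries.coeff n (FanoHilbertSeries d (B.map fun p => (p.1, p.2.2))) =
        (2 * (n : ℚ) + 1) + d * (n : ℚ) * ((n : ℚ) + 1) * (2 * (n : ℚ) + 1) / 12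
          - (B.map (fun p => ∑ j ∈ Finset.Icc 1 n,
              (((p.2.2 * j) % p.1 : ℕ) : ℚ)
                * ((p.1 : ℚ) - (((p.2.2 * j) % p.1 : ℕ) : ℚ)) / (2 * (p.1 : ℚ)))).sum := by
  have hr : ∀ p ∈ B.map fun p => (p.1, p.2.2), p.1 ≠ 0 := by
    simp only [List.mem_map]
    rintro _ ⟨p, hp, rfl⟩
    exact Nat.ne_zero_of_lt (hB p hp).2.1
  rw [fanoHilbertSeries_eq_mk d hr]
  refine ⟨by simp [Function.comp_def], fun n _ => by simp [List.map_map, Function.comp_def]⟩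
end

section
/- Let r ≥ 2 and a be integers with 0 < a < r and gcd(a,r) = 1. Let b ∈ {1,…,r-1} be the inverse of a modulo r, let b₁ ∈ {0,…,a-1} be the inverse of r modulo a (so b₁ = 0 when a = 1), and let b₂ ∈ {0,…,r-a-1} be the inverse of r modulo r-a (so b₂ = 0 when r-a = 1). Then b(r-b)/r = b₁(a-b₁)/a + b₂((r-a)-b₂)/(r-a) + 1/(r·a·(r-a)) as rational numbers. -/
set_option maxHeartbeats 800000

theorem typeI_aux (A C B M : ℚ) (hA : A ≠ 0) (hC : C ≠ 0) (hR : A + C ≠ 0)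
    (h : (A + C) * M + 1 = A * B) :
    B * ((A + C) - B) / (A + C)
      = M * (A - M) / A + (B - M) * (C - (B - M)) / C + 1 / ((A + C) * A * C) := by
  have expand : B * ((A + C) - B) / (A + C)
      - (M * (A - M) / A + (B - M) * (C - (B - M)) / C + 1 / ((A + C) * A * C))
      = (A * B - (A + C) * M - 1) * (A * B - A * M - C * M + 1) / ((A + C) * A * C) := by
    field_simp
    ring
  have hz : A * B - (A + C) * M - 1 = 0 := by linarith
  rw [hz, zero_mul, zero_div] at expand
  linarith

/-- Numerical Type I projection and degrees: for `0 < a < r` coprime,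
with `b` the inverse of `a` mod `r`, `b₁` the inverse of `r` mod `a`, and `b₂` the
inverse of `r` mod `r-a`, one has
`b(r-b)/r = b₁(a-b₁)/a + b₂((r-a)-b₂)/(r-a) + 1/(r·a·(r-a))`. -/
theorem typeI_projection_degree (r a b b₁ b₂ : ℕ)
    (hr : 2 ≤ r) (ha0 : 0 < a) (har : a < r) (hcop : Nat.Coprime a r)
    (hb1 : 1 ≤ b) (hb2 : b ≤ r - 1) (hb : (a * b) % r = 1)
    (hb₁a : b₁ ≤ a - 1) (hb₁ : (r * b₁) % a = 1 % a)
    (hb₂a : b₂ ≤ (r - a) - 1) (hb₂ : (r * b₂) % (r - a) = 1 % (r - a)) :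
    (b : ℚ) * ((r : ℚ) - (b : ℚ)) / (r : ℚ)
      = (b₁ : ℚ) * ((a : ℚ) - (b₁ : ℚ)) / (a : ℚ)
        + (b₂ : ℚ) * (((r : ℚ) - (a : ℚ)) - (b₂ : ℚ)) / ((r : ℚ) - (a : ℚ))
        + 1 / ((r : ℚ) * (a : ℚ) * ((r : ℚ) - (a : ℚ))) := by
  obtain ⟨c, hac⟩ : ∃ c, a + c = r := ⟨r - a, by omega⟩
  have hcra : r - a = c := by omega
  rw [hcra] at hb₂ hb₂a
  have hc1 : 1 ≤ c := by omega
  have hbr : b < r := by omega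
  -- the multiplier m with a*b = r*m + 1
  obtain ⟨m, hm⟩ : ∃ m, r * m + 1 = a * b := by
    have h := Nat.div_add_mod (a * b) r
    rw [hb] at h
    exact ⟨_, h⟩
  have hma : m < a := by
    by_contra h
    push_neg at h
    have h1 : r * a ≤ r * m := Nat.mul_le_mul_left r h
    have h2 : a * (b + 1) ≤ a * r := Nat.mul_le_mul_left a (by omega)
    rw [Nat.mul_add, Nat.mul_one] at h2
    linarith
  have hmb : m < b := by
    by_contra h
    push_neg at h
    have h1 : a * b ≤ a * m := Nat.mul_le_mul_left a h
    have h2 : a * m ≤ r * m := Nat.mul_le_mul_right m (le_of_lt har)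
    linarith
  -- coprimality of c with r and a
  have hcopc : Nat.Coprime c a := by
    rw [← hcra]
    exact (Nat.coprime_sub_self_left (le_of_lt har)).mpr hcop.symm
  have hcopcr : Nat.Coprime c r := by
    rw [← hac]
    exact (Nat.coprime_add_self_right).mpr hcopc
  -- Key fact 1 : b₁ + m = 0 or a
  have hK1 : b₁ + m = 0 ∨ b₁ + m = a := by
    have hdvd : a ∣ r * (b₁ + m) := by
      have heq : r * (b₁ + m) + 1 = r * b₁ + a * b := by
        rw [Nat.mul_add, ← hm]; ring
      have hmod : (r * (b₁ + m) + 1) % a = 1 % a := by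
        rw [heq]
        calc (r * b₁ + a * b) % a = (r * b₁) % a := by
              simp [Nat.add_mul_mod_self_left]
          _ = 1 % a := hb₁
      have h0 : r * (b₁ + m) ≡ 0 [MOD a] := by
        refine Nat.ModEq.add_right_cancel' 1 ?_
        show (r * (b₁ + m) + 1) % a = (0 + 1) % a
        rw [Nat.zero_add]
        exact hmod
      exact (Nat.modEq_zero_iff_dvd).mp h0
    have hdvd2 : a ∣ b₁ + m := Nat.Coprime.dvd_of_dvd_mul_left hcop hdvd
    obtain ⟨k, hk⟩ := hdvd2
    have hk2 : k < 2 := by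
      by_contra hk2
      push_neg at hk2
      have h2a : a * 2 ≤ a * k := Nat.mul_le_mul_left a hk2
      rw [← hk] at h2a
      omega
    interval_cases k <;> omega
  -- Key fact 2 : with t + m = b, b₂ = t or (b₂ = 0 and t = c)
  obtain ⟨t, ht⟩ : ∃ t, t + m = b := ⟨b - m, by omega⟩
  have ht1 : 1 ≤ t := by
    rcases Nat.eq_zero_or_pos t with h0 | h0
    · rw [h0] at ht; omega
    · exact h0
  have hrt : r * t = c * b + 1 := by
    have h1 : r * t + r * m = r * b := by
      rw [← Nat.mul_add, ht]
    have h2 : c * b + a * b = r * b := by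
      rw [← Nat.add_mul]
      congr 1
      omega
    linarith
  have htc : t ≤ c := by
    by_contra htc
    push_neg at htc
    have h1 : r * (c + 1) ≤ r * t := Nat.mul_le_mul_left r htc
    rw [Nat.mul_add, Nat.mul_one] at h1
    have h2 : c * (b + 1) ≤ c * r := Nat.mul_le_mul_left c (by omega)
    rw [Nat.mul_add, Nat.mul_one] at h2
    linarith
  have hK2 : b₂ = t ∨ (b₂ = 0 ∧ t = c) := by
    have hmod : (r * t) % c = (r * b₂) % c := by
      rw [hrt, hb₂]
      exact Nat.mul_add_mod c b 1
    have hmeq : t ≡ b₂ [MOD c] := by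
      have h' : r * t ≡ r * b₂ [MOD c] := hmod
      exact Nat.ModEq.cancel_left_of_coprime hcopcr h'
    have hb₂c : b₂ < c := by omega
    rw [Nat.ModEq] at hmeq
    rcases Nat.lt_or_ge t c with h | h
    · left
      rw [Nat.mod_eq_of_lt h, Nat.mod_eq_of_lt hb₂c] at hmeq
      omega
    · right
      have htc' : t = c := by omega
      rw [htc'] at hmeq
      simp [Nat.mod_eq_of_lt hb₂c] at hmeq
      omega
  -- cast everything to ℚ
  have hcQ : (c : ℚ) = (r : ℚ) - a := by
    have h' : ((a + c : ℕ) : ℚ) = (r : ℚ) := by rw [hac]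
    push_cast at h'
    linarith
  have hrQ : (r : ℚ) = (a : ℚ) + c := by linarith
  have hmQ : ((a : ℚ) + c) * m + 1 = (a : ℚ) * b := by
    rw [← hrQ]
    exact_mod_cast hm
  have haQ : (a : ℚ) ≠ 0 := by positivity
  have hcQ0 : (c : ℚ) ≠ 0 := by
    have h' : (0 : ℚ) < c := by exact_mod_cast hc1
    linarith
  have hRQ : (a : ℚ) + c ≠ 0 := by rw [← hrQ]; positivity
  -- rewrite b₁ and b₂ terms
  have hK1Q : (b₁ : ℚ) * ((a : ℚ) - b₁) = (m : ℚ) * ((a : ℚ) - m) := by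
    rcases hK1 with h | h
    · have hb₁0 : b₁ = 0 := by omega
      have hm0 : m = 0 := by omega
      rw [hb₁0, hm0]
    · have hbm : (b₁ : ℚ) = (a : ℚ) - m := by
        have h' : ((b₁ + m : ℕ) : ℚ) = (a : ℚ) := by rw [h]
        push_cast at h'
        linarith
      rw [hbm]; ring
  have htQ : (t : ℚ) = (b : ℚ) - m := by
    have h' : ((t + m : ℕ) : ℚ) = (b : ℚ) := by rw [ht]
    push_cast at h'
    linarith
  have hK2Q : (b₂ : ℚ) * ((c : ℚ) - b₂)
      = ((b : ℚ) - m) * ((c : ℚ) - ((b : ℚ) - m)) := by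
    rw [← htQ]
    rcases hK2 with h | ⟨h0, hc'⟩
    · rw [h]
    · have hteq : (t : ℚ) = (c : ℚ) := by exact_mod_cast congrArg (Nat.cast : ℕ → ℚ) hc'
      rw [h0, hteq]
      push_cast
      ring
  rw [← hcQ, hK1Q, hK2Q, hrQ]
  exact typeI_aux _ _ _ _ haQ hcQ0 hRQ hmQ
end

section
/- For integers r ≥ 1 and b, set T_b^r(t) = (1/(1-t^r)) · Σ_{i=1}^{r-1} (\overline{bi}(r-\overline{bi})/(2r)) t^i ∈ ℚ(t), where \overline{m} denotes the least nonnegative residue of m modulo r (so T_b^1 = 0). Let r ≥ 2 and a be integers with 0 < a < r and gcd(a,r) = 1, let b be the inverse of a modulo r, b₁ the inverse of r modulo a, and b₂ the inverse of r modulo r-a. Then in ℚ(t): t(1+t)/(2(1-t)^3 · r·a·(r-a)) − T_b^r(t) + T_{b₁}^a(t) + T_{b₂}^{r-a}(t) = t^r / ((1-t^r)(1-t^a)(1-t^{r-a})). -/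
/-!
Expand both sides as power series in `t`.  With `r = a + c`, the coefficient of `tⁿ` on the left
is `L n = n²/(2rac) - f_r (b n) + f_a (b₁ n) + f_c (b₂ n)`, where `f_k m = m̄ (k - m̄) / (2k)` is
`k`-periodic and even.  `L` vanishes on `(-r, r)`: every `0 < n < r` is `a x - c y` with
`1 ≤ x ≤ c`, `0 ≤ y < a`, and then `b n ≡ x + y [r]`, `b₁ n ≡ -y [a]`, `b₂ n ≡ x [c]`, which
makes `L n = 0` a polynomial identity.  The second difference `L n - L (n - a) - L (n - c) +
L (n - r)` is `1` when `r ∣ n` and `0` otherwise, since away from multiples of `r` the second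
difference of `f_r` is `-1/r`.  So `(1 - t^a)(1 - t^c) Σ L n tⁿ = Σ_{k ≥ 1} t^{kr}`, and
multiplying by `1 - t^r` leaves `t^r`.
-/

/-- `T_b^r(t) = (1/(1-t^r)) Σ_{i=1}^{r-1} (\overline{bi}(r-\overline{bi})/(2r)) tⁱ`
in `ℚ(t)`, where `\overline{m}` is the least nonnegative residue mod `r`
(so `T_b^1 = 0`). -/
noncomputable def Tterm (r b : ℕ) : RatFunc ℚ :=
  (1 / (1 - RatFunc.X ^ r)) *
    ∑ i ∈ Finset.Icc 1 (r - 1),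
      RatFunc.C ((((b * i) % r : ℕ) : ℚ)
          * ((r : ℚ) - (((b * i) % r : ℕ) : ℚ)) / (2 * (r : ℚ)))
        * RatFunc.X ^ i

open PowerSeries

theorem one_sub_X_pow_ne_zero {R : Type*} [Ring R] [Nontrivial R] {k : ℕ} (hk : k ≠ 0) :
    (1 - X ^ k : R⟦X⟧) ≠ 0 :=
  fun h => by simpa [hk] using congrArg constantCoeff h

theorem one_sub_X_pow_mul_mk {R : Type*} [CommRing R] (k : ℕ) {f : ℤ → R}
    (hf : ∀ m < 0, f m = 0) :
    (1 - X ^ k) * mk (fun n : ℕ => f n) = mk fun n : ℕ => f n - f (n - k) := by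
  ext n
  rw [sub_mul, one_mul, map_sub, coeff_X_pow_mul', coeff_mk, coeff_mk, coeff_mk]
  split_ifs with h
  · rw [Nat.cast_sub h]
  · rw [hf (n - k) (by omega), sub_zero]

theorem one_sub_X_pow_mul_mk_dvd {R : Type*} [CommRing R] {k : ℕ} (hk : 0 < k) :
    (1 - X ^ k) * mk (fun n => if 0 < n ∧ k ∣ n then (1 : R) else 0) = X ^ k := by
  ext n
  rw [sub_mul, one_mul, map_sub, coeff_X_pow_mul', coeff_mk, coeff_mk, coeff_X_pow]
  by_cases hkn : k ≤ n
  · obtain ⟨m, rfl⟩ := Nat.exists_eq_add_of_le hkn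
    rcases m.eq_zero_or_pos with rfl | hm
    · simp [hk]
    · simp [hm, hm.ne', Nat.dvd_add_self_left]
  · rw [if_neg hkn, if_neg fun h => hkn (Nat.le_of_dvd h.1 h.2), if_neg (by omega), sub_zero]

theorem one_sub_X_pow_three_mul_mk_sq {R : Type*} [CommRing R] :
    (1 - X) ^ 3 * mk (fun n : ℕ => (n : R) ^ 2) = X * (1 + X) := by
  have expand : ∀ S : R⟦X⟧, (1 - X) ^ 3 * S
      = S - X ^ 1 * S - X ^ 1 * S - X ^ 1 * S + X ^ 2 * S + X ^ 2 * S + X ^ 2 * S - X ^ 3 * S := by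
    intro S; ring
  rw [expand, mul_add, mul_one, ← pow_two]
  ext n
  simp only [map_sub, map_add, coeff_X_pow_mul', coeff_mk, coeff_X_pow, coeff_X]
  rcases n with _ | _ | _ | n
  · simp
  · simp
  · norm_num
  · simp only [show n + 3 ≠ 1 by omega, show n + 3 ≠ 2 by omega, if_false,
      show 1 ≤ n + 3 by omega, show 2 ≤ n + 3 by omega, show 3 ≤ n + 3 by omega, if_true]
    push_cast
    ring

theorem RatFunc.coe_injective {K : Type*} [Field K] :
    Function.Injective ((↑) : RatFunc K → LaurentSeries K) :=
  RingHom.injective _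

theorem RatFunc.coe_div_eq_of_mul_eq {K : Type*} [Field K] {p q : RatFunc K} {P Q F : K⟦X⟧}
    (hp : (p : LaurentSeries K) = P) (hq : (q : LaurentSeries K) = Q) (hQ : Q ≠ 0)
    (h : Q * F = P) : ((p / q : RatFunc K) : LaurentSeries K) = F := by
  have hQ' : (Q : LaurentSeries K) ≠ 0 :=
    (map_ne_zero_iff _ HahnSeries.ofPowerSeries_injective).mpr hQ
  rw [map_div₀, hp, hq, ← h, map_mul, mul_div_cancel_left₀ _ hQ']

noncomputable def sawtoothQuad (k : ℕ) (n : ℤ) : ℚ :=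
  ((n % k : ℤ) : ℚ) * (k - (n % k : ℤ)) / (2 * k)

theorem sawtoothQuad_congr {k : ℕ} {n n' : ℤ} (h : n ≡ n' [ZMOD k]) :
    sawtoothQuad k n = sawtoothQuad k n' := by
  unfold sawtoothQuad; rw [h]

theorem sawtoothQuad_of_modEq {k : ℕ} {n y : ℤ} (h : n ≡ y [ZMOD k]) (hy0 : 0 ≤ y) (hyk : y ≤ k) :
    sawtoothQuad k n = y * (k - y) / (2 * k) := by
  rw [sawtoothQuad_congr h, sawtoothQuad]
  rcases hyk.lt_or_eq with hyk | rfl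
  · rw [Int.emod_eq_of_lt hy0 hyk]
  · simp

theorem sawtoothQuad_neg (k : ℕ) (n : ℤ) : sawtoothQuad k (-n) = sawtoothQuad k n := by
  rcases k.eq_zero_or_pos with rfl | hk
  · simp [sawtoothQuad]
  have h0 := Int.emod_nonneg n (by omega : (k : ℤ) ≠ 0)
  have h1 := Int.emod_lt_of_pos n (by omega : (0 : ℤ) < k)
  have hneg : -n ≡ k - n % k [ZMOD k] :=
    (Int.mod_modEq n k).neg.symm.trans (Int.modEq_iff_dvd.mpr ⟨1, by ring⟩)
  rw [sawtoothQuad_of_modEq hneg (by omega) (by omega), sawtoothQuad]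
  push_cast; ring

theorem sawtoothQuad_second_diff {k : ℕ} (hk : 0 < k) (n : ℤ) :
    sawtoothQuad k (n - 1) + sawtoothQuad k (n + 1) - 2 * sawtoothQuad k n
      = (if (k : ℤ) ∣ n then 1 else 0) - 1 / k := by
  have h0 := Int.emod_nonneg n (by omega : (k : ℤ) ≠ 0)
  have h1 := Int.emod_lt_of_pos n (by omega : (0 : ℤ) < k)
  have hn : n ≡ n % k [ZMOD k] := (Int.mod_modEq n k).symm
  rw [sawtoothQuad_of_modEq hn h0 h1.le]
  by_cases hd : (k : ℤ) ∣ n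
  · have hz : n % k = 0 := Int.emod_eq_zero_of_dvd hd
    rw [hz] at hn
    rw [sawtoothQuad_of_modEq (y := k - 1) _ (by omega) (by omega),
      sawtoothQuad_of_modEq (y := 1) _ (by omega) (by omega), if_pos hd, hz]
    · push_cast; field_simp; ring
    · simpa using hn.add_right 1
    · simpa using (hn.sub_right 1).trans (Int.modEq_iff_dvd.mpr ⟨1, by ring⟩)
  · have hz : n % k ≠ 0 := fun h => hd (Int.dvd_of_emod_eq_zero h)
    rw [sawtoothQuad_of_modEq (hn.sub_right 1) (by omega) (by omega),
      sawtoothQuad_of_modEq (hn.add_right 1) (by omega) (by omega), if_neg hd]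
    push_cast; field_simp; ring

theorem IsCoprime.exists_eq_mul_sub_mul {a c : ℕ} (ha : 0 < a) (hac : IsCoprime (a : ℤ) c)
    {m : ℤ} (hm0 : 0 < m) (hm : m < a + c) :
    ∃ x y : ℤ, m = a * x - c * y ∧ 1 ≤ x ∧ x ≤ c ∧ 0 ≤ y ∧ y < a := by
  obtain ⟨u, v, huv⟩ := hac
  have hy0 := Int.emod_nonneg (-(v * m)) (by omega : (a : ℤ) ≠ 0)
  have hya := Int.emod_lt_of_pos (-(v * m)) (by omega : (0 : ℤ) < a)
  obtain ⟨x, hx⟩ : (a : ℤ) ∣ m + c * (-(v * m) % a) := by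
    rw [← Int.modEq_zero_iff_dvd]
    calc m + c * (-(v * m) % a) ≡ m + c * -(v * m) [ZMOD a] :=
          ((Int.mod_modEq _ _).mul_left _).add_left _
      _ = a * (u * m) := by linear_combination -m * huv
      _ ≡ 0 [ZMOD a] := Int.modEq_zero_iff_dvd.mpr (dvd_mul_right _ _)
  refine ⟨x, _, by linarith, ?_, ?_, hy0, hya⟩
  · nlinarith
  · nlinarith

-- `L` with `r = a + c`, written with `f_k = sawtoothQuad k`.
noncomputable def typeICoeff (a c b b₁ b₂ : ℕ) (m : ℤ) : ℚ :=
  m ^ 2 / (2 * ((a + c) * a * c)) - sawtoothQuad (a + c) (b * m) + sawtoothQuad a (b₁ * m)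
    + sawtoothQuad c (b₂ * m)

section
variable {a c b b₁ b₂ : ℕ}

theorem typeICoeff_neg (m : ℤ) : typeICoeff a c b b₁ b₂ (-m) = typeICoeff a c b b₁ b₂ m := by
  simp only [typeICoeff, mul_neg, sawtoothQuad_neg]
  push_cast; ring

theorem typeICoeff_eq_zero_of_pos_of_lt (ha : 0 < a) (hc : 0 < c)
    (hb : a * b ≡ 1 [ZMOD a + c]) (hb₁ : (a + c) * b₁ ≡ 1 [ZMOD a])
    (hb₂ : (a + c) * b₂ ≡ 1 [ZMOD c]) {m : ℤ} (hm0 : 0 < m) (hm : m < a + c) :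
    typeICoeff a c b b₁ b₂ m = 0 := by
  obtain ⟨s, hs⟩ := hb.dvd
  obtain ⟨s₁, hs₁⟩ := hb₁.dvd
  obtain ⟨s₂, hs₂⟩ := hb₂.dvd
  have hac : IsCoprime (a : ℤ) c := ⟨b₁ + s₁, b₁, by linear_combination -hs₁⟩
  obtain ⟨x, y, rfl, hx1, hxc, hy0, hya⟩ := hac.exists_eq_mul_sub_mul ha hm0 hm
  have hr : b * (a * x - c * y) ≡ x + y [ZMOD (a + c : ℕ)] :=
    Int.modEq_iff_dvd.mpr ⟨s * (x + y) + b * y, by push_cast; linear_combination (x + y) * hs⟩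
  have h₁ : -(b₁ * (a * x - c * y)) ≡ y [ZMOD a] :=
    Int.modEq_iff_dvd.mpr ⟨s₁ * y + b₁ * y + b₁ * x, by linear_combination y * hs₁⟩
  have h₂ : b₂ * (a * x - c * y) ≡ x [ZMOD c] :=
    Int.modEq_iff_dvd.mpr ⟨s₂ * x + b₂ * x + b₂ * y, by linear_combination x * hs₂⟩
  rw [typeICoeff, sawtoothQuad_of_modEq hr (by omega) (by omega), ← sawtoothQuad_neg a,
    sawtoothQuad_of_modEq h₁ hy0 hya.le, sawtoothQuad_of_modEq h₂ (by omega) hxc]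
  push_cast
  field_simp
  ring

theorem typeICoeff_eq_zero (ha : 0 < a) (hc : 0 < c)
    (hb : a * b ≡ 1 [ZMOD a + c]) (hb₁ : (a + c) * b₁ ≡ 1 [ZMOD a])
    (hb₂ : (a + c) * b₂ ≡ 1 [ZMOD c]) {m : ℤ} (hm0 : -(a + c : ℤ) < m) (hm : m < a + c) :
    typeICoeff a c b b₁ b₂ m = 0 := by
  rcases lt_trichotomy m 0 with hneg | rfl | hpos
  · rw [← typeICoeff_neg, typeICoeff_eq_zero_of_pos_of_lt ha hc hb hb₁ hb₂ (by omega) (by omega)]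
  · simp [typeICoeff, sawtoothQuad]
  · exact typeICoeff_eq_zero_of_pos_of_lt ha hc hb hb₁ hb₂ hpos hm

theorem typeICoeff_second_diff (ha : 0 < a) (hc : 0 < c) (hb : a * b ≡ 1 [ZMOD a + c])
    (m : ℤ) :
    typeICoeff a c b b₁ b₂ m - typeICoeff a c b b₁ b₂ (m - a) - typeICoeff a c b b₁ b₂ (m - c)
      + typeICoeff a c b b₁ b₂ (m - (a + c)) = if (a + c : ℤ) ∣ m then 1 else 0 := by
  obtain ⟨s, hs⟩ := hb.dvd
  have hdvd : (a + c : ℤ) ∣ b * m ↔ (a + c : ℤ) ∣ m :=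
    ⟨(IsCoprime.dvd_of_dvd_mul_left ⟨s, a, by linear_combination -hs⟩), (Dvd.dvd.mul_left · _)⟩
  have key := sawtoothQuad_second_diff (k := a + c) (by omega) (b * m)
  push_cast at key
  simp only [hdvd] at key
  have hr₁ : b * (m - a) ≡ b * m - 1 [ZMOD (a + c : ℕ)] :=
    Int.modEq_iff_dvd.mpr ⟨-s, by push_cast; linear_combination -hs⟩
  have hr₂ : b * (m - c) ≡ b * m + 1 [ZMOD (a + c : ℕ)] :=
    Int.modEq_iff_dvd.mpr ⟨s + b, by push_cast; linear_combination hs⟩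
  have hr₃ : b * (m - (a + c)) ≡ b * m [ZMOD (a + c : ℕ)] :=
    Int.modEq_iff_dvd.mpr ⟨b, by push_cast; ring⟩
  have ha₁ : b₁ * (m - a) ≡ b₁ * m [ZMOD a] := Int.modEq_iff_dvd.mpr ⟨b₁, by ring⟩
  have ha₂ : b₁ * (m - (a + c)) ≡ b₁ * (m - c) [ZMOD a] := Int.modEq_iff_dvd.mpr ⟨b₁, by ring⟩
  have hc₁ : b₂ * (m - c) ≡ b₂ * m [ZMOD c] := Int.modEq_iff_dvd.mpr ⟨b₂, by ring⟩
  have hc₂ : b₂ * (m - (a + c)) ≡ b₂ * (m - a) [ZMOD c] := Int.modEq_iff_dvd.mpr ⟨b₂, by ring⟩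
  have hquad : ((m : ℚ) ^ 2 - (m - a) ^ 2 - (m - c) ^ 2 + (m - (a + c)) ^ 2)
      / (2 * (a + c) * a * c) = 1 / (a + c) := by
    field_simp; ring
  simp only [typeICoeff]
  push_cast
  rw [sawtoothQuad_congr hr₁, sawtoothQuad_congr hr₂, sawtoothQuad_congr hr₃,
    sawtoothQuad_congr ha₁, sawtoothQuad_congr ha₂, sawtoothQuad_congr hc₁, sawtoothQuad_congr hc₂]
  linear_combination key + hquad

theorem typeICoeff_series (ha : 0 < a) (hc : 0 < c)
    (hb : a * b ≡ 1 [ZMOD a + c]) (hb₁ : (a + c) * b₁ ≡ 1 [ZMOD a])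
    (hb₂ : (a + c) * b₂ ≡ 1 [ZMOD c]) :
    (1 - X ^ (a + c)) * (1 - X ^ a) * (1 - X ^ c) * mk (fun n : ℕ => typeICoeff a c b b₁ b₂ n)
      = X ^ (a + c) := by
  set Lt := (Set.Ici (0 : ℤ)).indicator (typeICoeff a c b b₁ b₂)
  have hLt_neg : ∀ m < 0, Lt m = 0 := fun m hm => Set.indicator_of_notMem (by simpa using hm) _
  have hLt : ∀ m : ℤ, -(a + c : ℤ) < m → Lt m = typeICoeff a c b b₁ b₂ m := fun m hm => by
    by_cases h : 0 ≤ m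
    · exact Set.indicator_of_mem (Set.mem_Ici.mpr h) _
    · rw [hLt_neg m (by omega), typeICoeff_eq_zero ha hc hb hb₁ hb₂ hm (by omega)]
  have hΔΔ : ∀ m : ℤ, Lt m - Lt (m - c) - (Lt (m - a) - Lt (m - a - c))
      = if 0 < m ∧ (a + c : ℤ) ∣ m then 1 else 0 := by
    intro m
    rcases lt_trichotomy m 0 with hm | rfl | hm
    · rw [hLt_neg m hm, hLt_neg _ (by omega), hLt_neg _ (by omega), hLt_neg _ (by omega),
        if_neg (by omega)]
      ring
    · rw [hLt 0 (by omega), typeICoeff_eq_zero ha hc hb hb₁ hb₂ (m := 0) (by omega) (by omega),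
        hLt_neg _ (by omega), hLt_neg _ (by omega), hLt_neg _ (by omega), if_neg (by omega)]
      ring
    · rw [hLt m (by omega), hLt _ (by omega), hLt _ (by omega), hLt _ (by omega),
        if_congr (and_iff_right hm) rfl rfl, ← typeICoeff_second_diff ha hc hb m, sub_sub m (a : ℤ)]
      ring
  calc (1 - X ^ (a + c)) * (1 - X ^ a) * (1 - X ^ c) * mk (fun n : ℕ => typeICoeff a c b b₁ b₂ n)
      = (1 - X ^ (a + c)) * ((1 - X ^ a) * ((1 - X ^ c) * mk (fun n : ℕ => Lt n))) := by
        rw [mul_assoc, mul_assoc]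
        congr 3
        ext n
        rw [coeff_mk, coeff_mk, hLt n (by omega)]
    _ = (1 - X ^ (a + c)) * mk (fun n => if 0 < n ∧ a + c ∣ n then 1 else 0) := by
        rw [one_sub_X_pow_mul_mk c hLt_neg,
          one_sub_X_pow_mul_mk a (f := fun m => Lt m - Lt (m - c))]
        · simp only [hΔΔ, ← Nat.cast_add, Int.natCast_dvd_natCast, Nat.cast_pos]
        · intro m hm
          rw [hLt_neg m hm, hLt_neg _ (by omega), sub_zero]
    _ = X ^ (a + c) := one_sub_X_pow_mul_mk_dvd (by omega)

end

theorem sawtoothQuad_natCast_mul (k β n : ℕ) :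
    sawtoothQuad k (β * n) = ((β * n % k : ℕ) : ℚ) * (k - (β * n % k : ℕ)) / (2 * k) := by
  simp only [sawtoothQuad, ← Nat.cast_mul, ← Int.natCast_mod, Int.cast_natCast]

theorem one_sub_X_pow_mul_mk_sawtoothQuad {k : ℕ} (hk : 0 < k) (β : ℕ) :
    (1 - X ^ k) * mk (fun n : ℕ => sawtoothQuad k (β * n))
      = ∑ i ∈ Finset.Icc 1 (k - 1), C (sawtoothQuad k (β * i)) * X ^ i := by
  have h := one_sub_X_pow_mul_mk k
    (f := fun m => if 0 ≤ m then sawtoothQuad k (β * m) else 0) (fun m hm => if_neg hm.not_ge)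
  simp only [Nat.cast_nonneg, if_true] at h
  rw [h]
  ext n
  simp only [coeff_mk, map_sum, coeff_C_mul, coeff_X_pow, mul_ite, mul_one, mul_zero,
    Finset.sum_ite_eq, Finset.mem_Icc]
  rcases lt_or_ge n k with hnk | hkn
  · rw [if_neg (by omega), sub_zero]
    rcases n.eq_zero_or_pos with rfl | hn
    · simp [sawtoothQuad]
    · rw [if_pos (by omega)]
  · rw [if_pos (by omega), if_neg (by omega), sub_eq_zero]
    exact sawtoothQuad_congr (Int.modEq_iff_dvd.mpr ⟨-β, by ring⟩)

theorem coe_Tterm {k : ℕ} (hk : 0 < k) (β : ℕ) :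
    (Tterm k β : LaurentSeries ℚ) = (mk fun n : ℕ => sawtoothQuad k (β * n) : ℚ⟦X⟧) := by
  rw [Tterm, one_div_mul_eq_div]
  refine RatFunc.coe_div_eq_of_mul_eq ?_ ?_ ?_ (one_sub_X_pow_mul_mk_sawtoothQuad hk β)
  · have coe_C (q : ℚ) : ((RatFunc.C q : RatFunc ℚ) : LaurentSeries ℚ) = HahnSeries.C q := by
      simp
    simp only [map_sum, map_mul, map_pow, RatFunc.coe_X, coe_C, PowerSeries.coe_C,
      PowerSeries.coe_X, sawtoothQuad_natCast_mul]
  · simp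
  · exact one_sub_X_pow_ne_zero hk.ne'

theorem coe_quadratic {d : ℚ} (hd : d ≠ 0) :
    ((RatFunc.X * (1 + RatFunc.X) / (2 * (1 - RatFunc.X) ^ 3 * RatFunc.C d) : RatFunc ℚ)
      : LaurentSeries ℚ) = (mk fun n : ℕ => (n : ℚ) ^ 2 / (2 * d) : ℚ⟦X⟧) := by
  refine RatFunc.coe_div_eq_of_mul_eq (P := X * (1 + X)) (Q := 2 * (1 - X) ^ 3 * C d) ?_ ?_ ?_ ?_
  · simp
  · simp [map_ofNat]
  · exact fun h => by simpa [hd, map_ofNat] using congrArg constantCoeff h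
  · have hmk : mk (fun n : ℕ => (n : ℚ) ^ 2 / (2 * d))
        = C (2 * d)⁻¹ * mk fun n : ℕ => (n : ℚ) ^ 2 := by
      ext n; rw [coeff_C_mul, coeff_mk, coeff_mk, div_eq_inv_mul]
    calc 2 * (1 - X) ^ 3 * C d * mk (fun n : ℕ => (n : ℚ) ^ 2 / (2 * d))
        = C (2 * d * (2 * d)⁻¹) * ((1 - X) ^ 3 * mk fun n : ℕ => (n : ℚ) ^ 2) := by
          rw [hmk, map_mul, map_mul, ← map_ofNat C 2]; ring
      _ = X * (1 + X) := by
          rw [mul_inv_cancel₀ (by positivity), map_one, one_mul, one_sub_X_pow_three_mul_mk_sq]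

theorem typeI_projection_hilbert_series_general (r a b b₁ b₂ : ℕ)
    (ha0 : 0 < a) (har : a < r)
    (hb : (a * b) % r = 1)
    (hb₁ : (r * b₁) % a = 1 % a)
    (hb₂ : (r * b₂) % (r - a) = 1 % (r - a)) :
    RatFunc.X * (1 + RatFunc.X) /
        (2 * (1 - RatFunc.X) ^ 3 * RatFunc.C ((r : ℚ) * (a : ℚ) * ((r : ℚ) - (a : ℚ))))
      - Tterm r b + Tterm a b₁ + Tterm (r - a) b₂
    = RatFunc.X ^ r /
        ((1 - RatFunc.X ^ r) * (1 - RatFunc.X ^ a) * (1 - RatFunc.X ^ (r - a))) := by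
  obtain ⟨c, rfl⟩ := Nat.exists_eq_add_of_le har.le
  have hc : 0 < c := by omega
  rw [Nat.add_sub_cancel_left] at hb₂ ⊢
  have hbZ : (a : ℤ) * b ≡ 1 [ZMOD a + c] := by
    exact_mod_cast Int.natCast_modEq_iff.mpr (hb.trans (Nat.mod_eq_of_lt (by omega)).symm)
  have hb₁Z : ((a : ℤ) + c) * b₁ ≡ 1 [ZMOD a] := by exact_mod_cast Int.natCast_modEq_iff.mpr hb₁
  have hb₂Z : ((a : ℤ) + c) * b₂ ≡ 1 [ZMOD c] := by exact_mod_cast Int.natCast_modEq_iff.mpr hb₂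
  have hd : ((a + c : ℕ) : ℚ) * a * ((a + c : ℕ) - a) = (a + c) * a * c := by push_cast; ring
  apply RatFunc.coe_injective
  rw [map_add, map_add, map_sub, hd, coe_quadratic (by positivity), coe_Tterm (by omega),
    coe_Tterm ha0, coe_Tterm hc,
    RatFunc.coe_div_eq_of_mul_eq ?_ ?_ ?_ (typeICoeff_series ha0 hc hbZ hb₁Z hb₂Z)]
  · rw [← map_sub, ← map_add, ← map_add]
    congr 1
  · simp
  · simp
  · exact mul_ne_zero (mul_ne_zero (one_sub_X_pow_ne_zero (by omega))
      (one_sub_X_pow_ne_zero ha0.ne')) (one_sub_X_pow_ne_zero hc.ne')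

/-- Effect of a Type I projection on the K3 Hilbert series:
`t(1+t)/(2(1-t)³·r·a·(r-a)) − T_b^r + T_{b₁}^a + T_{b₂}^{r-a}
  = t^r/((1-t^r)(1-t^a)(1-t^{r-a}))` in `ℚ(t)`. -/
theorem typeI_projection_hilbert_series (r a b b₁ b₂ : ℕ)
    (hr : 2 ≤ r) (ha0 : 0 < a) (har : a < r) (hcop : Nat.Coprime a r)
    (hb1 : 1 ≤ b) (hb2 : b ≤ r - 1) (hb : (a * b) % r = 1)
    (hb₁a : b₁ ≤ a - 1) (hb₁ : (r * b₁) % a = 1 % a)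
    (hb₂a : b₂ ≤ (r - a) - 1) (hb₂ : (r * b₂) % (r - a) = 1 % (r - a)) :
    RatFunc.X * (1 + RatFunc.X) /
        (2 * (1 - RatFunc.X) ^ 3 * RatFunc.C ((r : ℚ) * (a : ℚ) * ((r : ℚ) - (a : ℚ))))
      - Tterm r b + Tterm a b₁ + Tterm (r - a) b₂
    = RatFunc.X ^ r /
        ((1 - RatFunc.X ^ r) * (1 - RatFunc.X ^ a) * (1 - RatFunc.X ^ (r - a))) :=
  typeI_projection_hilbert_series_general r a b b₁ b₂ ha0 har hb hb₁ hb₂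
end

section
/- Let g be an integer and let (r_1,b_1), …, (r_k,b_k) be pairs of integers with r_j ≥ 2 and 1 ≤ b_j ≤ r_j - 1. Let G be the Gram matrix (with respect to the basis {B} ∪ {E_{j,i}}) of the symmetric bilinear form defined by: ⟨B,B⟩ = 2g-2; ⟨E_{j,i},E_{j,i}⟩ = -2; ⟨E_{j,i},E_{j,i+1}⟩ = 1 for 1 ≤ i ≤ r_j-2; ⟨B,E_{j,r_j-b_j}⟩ = 1; all other pairings of basis vectors 0. Then det G = (-1)^{Σ_j (r_j-1)} · (Π_{j=1}^{k} r_j) · (2g - 2 + Σ_{j=1}^{k} b_j(r_j - b_j)/r_j). -/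
/-!
The chain of `r - 1` curves of square `-2` has Gram matrix `-A_{r-1}`, where `A_n` is the
Cartan matrix of type `A`. The inverse of `A_n` is the Green function of the discrete Laplacian
on the path `1, …, n` with zero boundary values at `0` and `n + 1`,
`G(i, j) = min(i, j) (n + 1 - max(i, j)) / (n + 1)`. Comparing the `(0, 0)` entries of
`adj A_{n+1} = det A_{n+1} • A_{n+1}⁻¹` gives `det A_n = det A_{n+1} · G(1, 1)`, whence
`det A_n = n + 1` by induction. The Gram matrix of `Γ(g, Ɓ)` is block diagonal apart from the row
and column of `B`, so taking the Schur complement of the chains leaves the `1 × 1` matrix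
`2g - 2 + Σ_j G_{r_j - 1}(r_j - b_j, r_j - b_j) = 2g - 2 + Σ_j b_j (r_j - b_j) / r_j`.
-/

/-- Index type for the basis `{B} ∪ {E_{j,i} : 1 ≤ j ≤ k, 1 ≤ i ≤ r_j - 1}` of the
lattice of the quasistellar graph; `Sum.inl ()` is the central vertex `B`, and
`Sum.inr ⟨j, c⟩` is the curve `E_{j, c+1}`. -/
abbrev GraphIdx (k : ℕ) (r : Fin k → ℕ) := Unit ⊕ (Σ j : Fin k, Fin (r j - 1))

/-- The Gram entries of the symmetric bilinear form of the quasistellar graph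
`Γ(g, Ɓ)`: `⟨B,B⟩ = 2g-2`, `⟨E_{j,i},E_{j,i}⟩ = -2`, consecutive curves of the same
chain pair to `1`, `⟨B, E_{j, r_j - b_j}⟩ = 1`, and all other pairings vanish. -/
def gram (g : ℤ) (k : ℕ) (r b : Fin k → ℕ) :
    GraphIdx k r → GraphIdx k r → ℚ
  | Sum.inl _, Sum.inl _ => 2 * (g : ℚ) - 2
  | Sum.inl _, Sum.inr ⟨j, c⟩ => if (c : ℕ) + 1 = r j - b j then 1 else 0
  | Sum.inr ⟨j, c⟩, Sum.inl _ => if (c : ℕ) + 1 = r j - b j then 1 else 0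
  | Sum.inr ⟨j, c⟩, Sum.inr ⟨j', c'⟩ =>
      if j = j' then
        if (c : ℕ) = (c' : ℕ) then -2
        else if (c : ℕ) + 1 = (c' : ℕ) ∨ (c' : ℕ) + 1 = (c : ℕ) then 1 else 0
      else 0

namespace CartanMatrix

open Matrix

theorem sum_A_mul {R : Type*} [Ring R] (n : ℕ) (f : ℕ → R) (h0 : f 0 = 0) (hn : f (n + 1) = 0)
    (i : Fin n) :
    ∑ t : Fin n, (A n).map (Int.cast : ℤ → R) i t * f (t + 1) =
      2 * f (i + 1) - f i - f (i + 2) := by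
  have hsplit : ∀ t : Fin n, (A n).map (Int.cast : ℤ → R) i t * f (t + 1) =
      (if (t : ℕ) = i then 2 * f (i + 1) else 0) - (if (t : ℕ) + 1 = i then f i else 0)
        - (if (t : ℕ) = i + 1 then f (i + 2) else 0) := by
    intro t
    simp only [map_apply, A, of_apply, Fin.ext_iff]
    split_ifs <;> first | omega | simp_all
  have hsum : ∀ (m : ℕ) (x : R), ∑ t : Fin n, (if (t : ℕ) = m then x else 0) =
      if m < n then x else 0 := fun m x => by
    rw [Fin.sum_univ_eq_sum_range (fun t => if t = m then x else 0), Finset.sum_ite_eq']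
    simp
  have hprev : ∑ t : Fin n, (if (t : ℕ) + 1 = i then f i else 0) = f i := by
    obtain ⟨_ | i', hi⟩ := i
    · simp [h0]
    · simpa [show i' < n by omega] using hsum i' (f (i' + 1))
  simp only [Finset.sum_congr rfl fun t _ => hsplit t, Finset.sum_sub_distrib, hsum, hprev, i.2,
    if_true]
  split_ifs with h
  · rfl
  · rw [show (i : ℕ) + 2 = n + 1 by omega, hn]

def greenFun (n i j : ℕ) : ℚ := (min i j : ℕ) * ((n : ℚ) + 1 - (max i j : ℕ)) / (n + 1)

theorem greenFun_of_le {n i j : ℕ} (h : i ≤ j) :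
    greenFun n i j = i * (n + 1 - j) / (n + 1) := by
  simp [greenFun, min_eq_left h, max_eq_right h]

theorem greenFun_of_ge {n i j : ℕ} (h : j ≤ i) :
    greenFun n i j = j * (n + 1 - i) / (n + 1) := by
  simp [greenFun, min_eq_right h, max_eq_left h]

theorem greenFun_zero_left (n j : ℕ) : greenFun n 0 j = 0 := by
  simp [greenFun_of_le (Nat.zero_le j)]

theorem greenFun_succ_left (n j : ℕ) (hj : j ≤ n + 1) : greenFun n (n + 1) j = 0 := by
  simp [greenFun_of_ge hj]

theorem greenFun_laplacian (n i j : ℕ) :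
    2 * greenFun n (i + 1) j - greenFun n i j - greenFun n (i + 2) j =
      if i + 1 = j then 1 else 0 := by
  rcases lt_trichotomy (i + 1) j with h | rfl | h
  · rw [greenFun_of_le h.le, greenFun_of_le (by omega), greenFun_of_le h, if_neg h.ne]
    push_cast
    ring
  · rw [greenFun_of_le le_rfl, greenFun_of_le (by omega), greenFun_of_ge (by omega), if_pos rfl]
    field_simp
    push_cast
    ring
  · rw [greenFun_of_ge (by omega), greenFun_of_ge (by omega), greenFun_of_ge (by omega),
      if_neg h.ne']
    push_cast
    ring

def AInv (n : ℕ) : Matrix (Fin n) (Fin n) ℚ := of fun i j => greenFun n (i + 1) (j + 1)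

theorem A_mul_AInv (n : ℕ) : (A n).map (Int.cast : ℤ → ℚ) * AInv n = 1 := by
  ext i j
  rw [mul_apply]
  simp only [AInv, of_apply]
  rw [sum_A_mul n (greenFun n · (j + 1)) (greenFun_zero_left n _)
    (greenFun_succ_left n _ (by omega)), greenFun_laplacian n i (j + 1), one_apply]
  simp [Fin.ext_iff]

theorem A_submatrix_succ (n : ℕ) : (A (n + 1)).submatrix Fin.succ Fin.succ = A n := by
  ext i j
  simp [A, Fin.ext_iff]

theorem AInv_apply_self (n : ℕ) (i : Fin n) : AInv n i i = (i + 1) * (n - i) / (n + 1) := by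
  rw [AInv, of_apply, greenFun_of_le le_rfl]
  push_cast
  ring

theorem AInv_pred_apply_self {r b : ℕ} (i : Fin (r - 1)) (hi : (i : ℕ) + 1 = r - b) :
    AInv (r - 1) i i = b * (r - b) / r := by
  have hir := i.2
  have hr : ((r - 1 : ℕ) : ℚ) = r - 1 := Nat.cast_pred (by omega)
  have hs : ((i : ℕ) : ℚ) = r - b - 1 := by
    rw [show (i : ℕ) = r - (b + 1) by omega, Nat.cast_sub (by omega)]
    push_cast
    ring
  rw [AInv_apply_self, hr, hs]
  ring

theorem det_A (n : ℕ) : (A n).det = n + 1 := by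
  suffices h : ((A n).map (Int.cast : ℤ → ℚ)).det = n + 1 by
    have := (Int.castRingHom ℚ).map_det (A n)
    simp only [RingHom.mapMatrix_apply, Int.coe_castRingHom, h] at this
    exact_mod_cast this
  induction n with
  | zero => simp
  | succ n ih =>
    have hadj : adjugate ((A (n + 1)).map (Int.cast : ℤ → ℚ)) =
        ((A (n + 1)).map (Int.cast : ℤ → ℚ)).det • AInv (n + 1) := by
      rw [← Matrix.mul_one (adjugate _), ← A_mul_AInv, ← Matrix.mul_assoc, adjugate_mul,
        smul_mul_assoc, Matrix.one_mul]
    have h00 := congrFun (congrFun hadj 0) 0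
    rw [adjugate_fin_succ_eq_det_submatrix, Fin.succAbove_zero, submatrix_map,
      A_submatrix_succ, ih] at h00
    rw [Matrix.smul_apply, AInv_apply_self, smul_eq_mul] at h00
    norm_num at h00
    have hn : (n : ℚ) + 1 ≠ 0 := by positivity
    rw [mul_div_assoc', eq_div_iff (by positivity), mul_comm] at h00
    push_cast
    exact (mul_right_cancel₀ hn h00).symm

theorem det_neg_A_map {R : Type*} [CommRing R] (n : ℕ) :
    (-(A n).map (Int.cast : ℤ → R)).det = (-1) ^ n * (n + 1) := by
  have h := (Int.castRingHom R).map_det (A n)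
  simp only [RingHom.mapMatrix_apply, Int.coe_castRingHom, det_A] at h
  rw [det_neg, Fintype.card_fin, ← h]
  push_cast
  ring

end CartanMatrix

namespace Matrix

variable {ι : Type*} [Fintype ι] {m : ι → Type*} [∀ j, Fintype (m j)]
  [∀ j, DecidableEq (m j)] {R : Type*} [CommRing R]

theorem det_blockDiagonal' [DecidableEq ι] (d : ∀ j, Matrix (m j) (m j) R) :
    (blockDiagonal' d).det = ∏ j, (d j).det := by
  -- `BlockTriangular.det_fintype` needs an order on the blocks; any one will do.
  let _ : LinearOrder ι := LinearOrder.lift' _ (Fintype.equivFin ι).injective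
  rw [BlockTriangular.det_fintype (blockTriangular_blockDiagonal' d)]
  refine Finset.prod_congr rfl fun j _ => ?_
  let e : m j ≃ {s : Σ i, m i // s.1 = j} :=
    { toFun := fun x => ⟨⟨j, x⟩, rfl⟩
      invFun := fun s => cast (congrArg m s.2) s.1.2
      left_inv := fun _ => rfl
      right_inv := by rintro ⟨⟨i, x⟩, rfl⟩; rfl }
  rw [← det_submatrix_equiv_self e]
  congr 1
  ext x y
  exact blockDiagonal'_apply_eq d j x y

theorem sum_sigma_ite_snd_eq {M : Type*} [AddCommMonoid M] (σ : ∀ j, m j)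
    (f : (Σ j, m j) → M) :
    ∑ s, (if s.2 = σ s.1 then f s else 0) = ∑ j, f ⟨j, σ j⟩ := by
  rw [Fintype.sum_sigma]
  exact Finset.sum_congr rfl fun j _ => by simp

theorem det_fromBlocks_blockDiagonal' [DecidableEq ι] (a : R) (d e : ∀ j, Matrix (m j) (m j) R)
    (hde : ∀ j, d j * e j = 1) (σ : ∀ j, m j) :
    (fromBlocks (of fun _ _ => a : Matrix Unit Unit R) (of fun _ s => if s.2 = σ s.1 then 1 else 0)
      (of fun s _ => if s.2 = σ s.1 then 1 else 0) (blockDiagonal' d)).det =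
      (∏ j, (d j).det) * (a - ∑ j, e j (σ j) (σ j)) := by
  have hinv : blockDiagonal' d * blockDiagonal' e = 1 := by
    rw [← blockDiagonal'_mul, funext hde]
    exact blockDiagonal'_one
  have : Invertible _ := invertibleOfRightInverse _ _ hinv
  rw [det_fromBlocks₂₂, invOf_eq_right_inv hinv, det_blockDiagonal', det_unique]
  congr 2
  simp only [sub_apply, of_apply, mul_apply, ite_mul, one_mul, zero_mul, mul_ite, mul_one,
    mul_zero, sum_sigma_ite_snd_eq]
  refine congrArg (a - ·) (Finset.sum_congr rfl fun j _ => ?_)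
  rw [Fintype.sum_eq_single j fun j' hj' => blockDiagonal'_apply_ne e _ _ hj',
    blockDiagonal'_apply_eq]

end Matrix

open CartanMatrix in
theorem gram_eq_fromBlocks (g : ℤ) (k : ℕ) (r b : Fin k → ℕ) (σ : ∀ j, Fin (r j - 1))
    (hσ : ∀ j, (σ j : ℕ) + 1 = r j - b j) :
    Matrix.of (gram g k r b) = Matrix.fromBlocks (Matrix.of fun _ _ => 2 * (g : ℚ) - 2)
      (Matrix.of fun _ s => if s.2 = σ s.1 then 1 else 0)
      (Matrix.of fun s _ => if s.2 = σ s.1 then 1 else 0)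
      (Matrix.blockDiagonal' fun j => -(A (r j - 1)).map (Int.cast : ℤ → ℚ)) := by
  have hσ' : ∀ j (c : Fin (r j - 1)), (c : ℕ) + 1 = r j - b j ↔ c = σ j := fun j c => by
    rw [← hσ, Fin.ext_iff]
    omega
  ext (_ | ⟨j, c⟩) (_ | ⟨j', c'⟩)
  · rfl
  · simp [gram, hσ']
  · simp [gram, hσ']
  · by_cases h : j = j'
    · subst h
      simp only [gram, Matrix.fromBlocks_apply₂₂, Matrix.blockDiagonal'_apply_eq,
        Matrix.neg_apply, Matrix.map_apply, A, Matrix.of_apply, Fin.ext_iff]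
      split_ifs <;> simp
    · simp [gram, h, Matrix.blockDiagonal'_apply_ne _ _ _ h]

theorem quasistellar_graph_discriminant_general (g : ℤ) (k : ℕ) (r b : Fin k → ℕ)
    (hb : ∀ j, 1 ≤ b j ∧ b j ≤ r j - 1) :
    Matrix.det (Matrix.of (gram g k r b))
      = (-1 : ℚ) ^ (∑ j, (r j - 1)) * (∏ j, (r j : ℚ))
        * (2 * (g : ℚ) - 2 + ∑ j, (b j : ℚ) * ((r j : ℚ) - (b j : ℚ)) / (r j : ℚ)) := by
  let σ : ∀ j, Fin (r j - 1) := fun j => ⟨r j - b j - 1, by have := hb j; omega⟩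
  have hσ : ∀ j, (σ j : ℕ) + 1 = r j - b j := fun j => by
    have := hb j
    show r j - b j - 1 + 1 = _
    omega
  have hr : ∀ j, ((r j - 1 : ℕ) : ℚ) + 1 = r j := fun j => by
    rw [Nat.cast_pred (by have := hb j; omega), sub_add_cancel]
  have hdiag : ∀ j, CartanMatrix.AInv (r j - 1) (σ j) (σ j) = b j * (r j - b j) / r j :=
    fun j => CartanMatrix.AInv_pred_apply_self (σ j) (hσ j)
  rw [gram_eq_fromBlocks g k r b σ hσ,
    Matrix.det_fromBlocks_blockDiagonal' _ _ (fun j => -CartanMatrix.AInv (r j - 1))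
      (fun j => by rw [neg_mul_neg, CartanMatrix.A_mul_AInv]) σ]
  simp only [CartanMatrix.det_neg_A_map, hr, Finset.prod_mul_distrib, Finset.prod_pow_eq_pow_sum,
    Matrix.neg_apply, hdiag, Finset.sum_neg_distrib, sub_neg_eq_add]

/-- The determinant of the Gram matrix of the quasistellar graph
`Γ(g,Ɓ)` is `(-1)^{Σ_j (r_j-1)} · (Π_j r_j) · (2g - 2 + Σ_j b_j(r_j - b_j)/r_j)`. -/
theorem quasistellar_graph_discriminant (g : ℤ) (k : ℕ) (r b : Fin k → ℕ)
    (hr : ∀ j, 2 ≤ r j) (hb : ∀ j, 1 ≤ b j ∧ b j ≤ r j - 1) :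
    Matrix.det (Matrix.of (gram g k r b))
      = (-1 : ℚ) ^ (∑ j, (r j - 1)) * (∏ j, (r j : ℚ))
        * (2 * (g : ℚ) - 2 + ∑ j, (b j : ℚ) * ((r j : ℚ) - (b j : ℚ)) / (r j : ℚ)) :=
  quasistellar_graph_discriminant_general g k r b hb
end
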